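/- Generative degenerate-support theorem: let P be the clean joint distribution on ℝ^p × ℝ^q and suppose there exist a unit vector u ∈ ℝ^p and a ∈ ℝ such that the first marginal P_X gives probability one to the hyperplane { x : uᵀx = a }. Fix s > 0 and the trigger η = s·u, and let Q be any backdoor joint distribution on ℝ^p × ℝ^q whose first marginal Q_X is the pushforward of P_X under x ↦ x + η. Let ρ ∈ (0,1), M = (1−ρ)P + ρQ, and let p₀ be a probability measure on ℝ^q such that P, Q, M admit conditional density kernels f^cl, f^bd, f^poi : ℝ^p × ℝ^q → [0,1] with respect to p₀: P(dx,dy) = f^cl(x,y) p₀(dy) P_X(dx), Q(dx,dy) = f^bd(x,y) p₀(dy) Q_X(dx), M(dx,dy) = f^poi(x,y) p₀(dy) M_X(dx). Then for every loss ℓ : [0,1]² → [0,∞) and every measurable f̂ : ℝ^p × ℝ^q → [0,1]: ∫∫ ℓ(f̂(x,y), f^cl(x,y)) p₀(dy) P_X(dx) ≤ (1−ρ)^{-1} ∫∫ ℓ(f̂(x,y), f^poi(x,y)) p₀(dy) M_X(dx), and ∫∫ ℓ(f̂(x,y), f^bd(x,y)) p₀(dy) Q_X(dx) ≤ ρ^{-1}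 ∫∫ ℓ(f̂(x,y), f^poi(x,y)) p₀(dy) M_X(dx). Hence a backdoor attack on a generative model with trigger along a degenerate direction of arbitrarily small magnitude is successful. -/

import Mathlib

/-! The clean inputs lie on the hyperplane `⟪u, x⟫ = a` and the triggered ones on the parallel
hyperplane `⟪u, x⟫ = a + s`, so `P_X ⟂ Q_X`. Over the first hyperplane the poisoned law `M` is
`(1 - ρ) P`, which forces `f^poi = f^cl` almost everywhere for `P_X ⊗ p₀`; symmetrically
`f^poi = f^bd` almost everywhere for `Q_X ⊗ p₀`. Both bounds then follow from
`M_X = (1 - ρ) P_X + ρ Q_X`. -/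

open MeasureTheory
open scoped RealInnerProductSpace ENNReal

theorem Filter.EventuallyEq.of_ofReal {α : Type*} {l : Filter α} {f g : α → ℝ}
    (h : (fun x => ENNReal.ofReal (f x)) =ᶠ[l] fun x => ENNReal.ofReal (g x))
    (hf : ∀ x, 0 ≤ f x) (hg : ∀ x, 0 ≤ g x) : f =ᶠ[l] g :=
  h.mono fun x hx => (ENNReal.ofReal_eq_ofReal_iff (hf x) (hg x)).1 hx

namespace MeasureTheory

variable {X Y : Type*} [MeasurableSpace X] [MeasurableSpace Y]

theorem Measure.fst_smul (c : ℝ≥0∞) (μ : Measure (X × Y)) : (c • μ).fst = c • μ.fst :=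
  Measure.map_smul _ _ _

theorem Measure.smul_left_cancel {c : ℝ≥0∞} (hc : c ≠ 0) (hc' : c ≠ ∞) {μ ν : Measure X}
    (h : c • μ = c • ν) : μ = ν := by
  ext A hA
  simpa [ENNReal.mul_right_inj hc hc'] using congrArg (· A) h

theorem Measure.restrict_compl_add_smul {μ ν : Measure X} (c d : ℝ≥0∞) {S : Set X}
    (hμS : μ S = 0) (hνS : ν Sᶜ = 0) : (c • μ + d • ν).restrict Sᶜ = c • μ := by
  rw [Measure.restrict_add, Measure.restrict_smul, Measure.restrict_smul,
    Measure.restrict_eq_self_of_ae_mem (s := Sᶜ) (compl_mem_ae_iff.2 hμS),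
    Measure.restrict_eq_zero.2 hνS, smul_zero, add_zero]

theorem lintegral_le_inv_mul_lintegral_of_smul_le {μ ν : Measure X} {c : ℝ≥0∞} (hc : c ≠ 0)
    (hc' : c ≠ ∞) (h : c • μ ≤ ν) (f : X → ℝ≥0∞) :
    ∫⁻ x, f x ∂μ ≤ c⁻¹ * ∫⁻ x, f x ∂ν :=
  calc ∫⁻ x, f x ∂μ = c⁻¹ * ∫⁻ x, f x ∂(c • μ) := by
        rw [lintegral_smul_measure, smul_eq_mul, ← mul_assoc, ENNReal.inv_mul_cancel hc hc',
          one_mul]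
    _ ≤ c⁻¹ * ∫⁻ x, f x ∂ν := by gcongr

theorem lintegral_lintegral_congr_of_ae_eq_prod {β : Type*} {μ : Measure X} {ν : Measure Y}
    [SFinite ν] {f g : X → Y → β} (h : Function.uncurry f =ᵐ[μ.prod ν] Function.uncurry g)
    (Φ : X → Y → β → ℝ≥0∞) :
    ∫⁻ x, ∫⁻ y, Φ x y (f x y) ∂ν ∂μ = ∫⁻ x, ∫⁻ y, Φ x y (g x y) ∂ν ∂μ := by
  refine lintegral_congr_ae ?_
  filter_upwards [Measure.ae_ae_of_ae_prod h] with x hx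
  refine lintegral_congr_ae ?_
  filter_upwards [hx] with y hy
  rw [show f x y = g x y from hy]

theorem Measure.eq_withDensity_of_forall_eq_lintegral_section {μ : Measure (X × Y)}
    {ν : Measure Y} [SFinite ν] {f : X × Y → ℝ≥0∞} (hf : Measurable f)
    (h : ∀ A, MeasurableSet A → μ A = ∫⁻ x, ∫⁻ y in {y | (x, y) ∈ A}, f (x, y) ∂ν ∂μ.fst) :
    μ = (μ.fst.prod ν).withDensity f := by
  ext A hA
  rw [h A hA, withDensity_apply _ hA, ← lintegral_indicator hA,
    lintegral_prod _ (hf.indicator hA).aemeasurable]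
  refine lintegral_congr fun x => ?_
  exact (lintegral_indicator (measurable_prodMk_left hA) _).symm

theorem ae_eq_of_withDensity_of_add_of_mutuallySingular
    {P Q M : Measure (X × Y)} [IsFiniteMeasure P] [SFinite M] {ν : Measure Y} [SigmaFinite ν]
    {c d : ℝ≥0∞} (hc : c ≠ 0) (hc' : c ≠ ∞) (hM : M = c • P + d • Q)
    (hPQ : P.fst ⟂ₘ Q.fst) {F G : X × Y → ℝ≥0∞} (hF : Measurable F) (hG : Measurable G)
    (hPF : P = (P.fst.prod ν).withDensity F) (hMG : M = (M.fst.prod ν).withDensity G) :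
    F =ᵐ[P.fst.prod ν] G := by
  obtain ⟨S, hS, hPS, hQS⟩ := hPQ
  have hT : Prod.fst ⁻¹' Sᶜ = (Prod.fst ⁻¹' S : Set (X × Y))ᶜ := Set.preimage_compl
  have hMT : M.restrict (Prod.fst ⁻¹' Sᶜ) = c • P := by
    rw [hT, hM]
    rw [Measure.fst_apply hS] at hPS
    rw [Measure.fst_apply hS.compl, hT] at hQS
    exact Measure.restrict_compl_add_smul c d hPS hQS
  have hMfst : M.fst.restrict Sᶜ = c • P.fst := by
    rw [hM, Measure.fst_add, Measure.fst_smul, Measure.fst_smul]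
    exact Measure.restrict_compl_add_smul c d hPS hQS
  have hPG : P = (P.fst.prod ν).withDensity G := by
    refine Measure.smul_left_cancel hc hc' ?_
    rw [← hMT, hMG, restrict_withDensity (measurable_fst hS.compl), ← Set.prod_univ,
      ← Measure.prod_restrict, Measure.restrict_univ, hMfst, Measure.prod_smul_left,
      withDensity_smul_measure]
  exact (withDensity_eq_iff_of_sigmaFinite hF.aemeasurable hG.aemeasurable).1 (hPF.symm.trans hPG)

theorem condDensity_ae_eq_of_add_of_mutuallySingular
    {P Q M : Measure (X × Y)} [IsFiniteMeasure P] [SFinite M] {ν : Measure Y} [SigmaFinite ν]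
    {c d : ℝ≥0∞} (hc : c ≠ 0) (hc' : c ≠ ∞) (hM : M = c • P + d • Q)
    (hPQ : P.fst ⟂ₘ Q.fst) {f g : X → Y → ℝ}
    (hf : Measurable (Function.uncurry f)) (hg : Measurable (Function.uncurry g))
    (hf₀ : ∀ x y, 0 ≤ f x y) (hg₀ : ∀ x y, 0 ≤ g x y)
    (hPf : ∀ A, MeasurableSet A →
      P A = ∫⁻ x, ∫⁻ y in {y | (x, y) ∈ A}, ENNReal.ofReal (f x y) ∂ν ∂P.fst)
    (hMg : ∀ A, MeasurableSet A →
      M A = ∫⁻ x, ∫⁻ y in {y | (x, y) ∈ A}, ENNReal.ofReal (g x y) ∂ν ∂M.fst) :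
    Function.uncurry f =ᵐ[P.fst.prod ν] Function.uncurry g :=
  (ae_eq_of_withDensity_of_add_of_mutuallySingular hc hc' hM hPQ hf.ennreal_ofReal
      hg.ennreal_ofReal (Measure.eq_withDensity_of_forall_eq_lintegral_section
        hf.ennreal_ofReal hPf) (Measure.eq_withDensity_of_forall_eq_lintegral_section
        hg.ennreal_ofReal hMg)).of_ofReal (fun z => hf₀ z.1 z.2) (fun z => hg₀ z.1 z.2)

theorem Measure.mutuallySingular_map_add_of_ae_inner_eq {E : Type*}
    [NormedAddCommGroup E] [InnerProductSpace ℝ E] [MeasurableSpace E] [BorelSpace E]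
    {μ : Measure E} {u v : E} {a : ℝ} (hμ : ∀ᵐ x ∂μ, ⟪u, x⟫ = a) (huv : ⟪u, v⟫ ≠ 0) :
    μ ⟂ₘ μ.map (· + v) := by
  have hH : MeasurableSet {x : E | ⟪u, x⟫ = a} :=
    measurableSet_eq_fun (by fun_prop) measurable_const
  have hHc : μ {x | ⟪u, x⟫ = a}ᶜ = 0 := hμ
  refine ⟨{x | ⟪u, x⟫ = a}ᶜ, hH.compl, hHc, ?_⟩
  rw [compl_compl, Measure.map_apply (measurable_add_const v) hH]
  refine measure_mono_null ?_ hHc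
  intro x hx hxa
  refine huv ?_
  simp only [Set.mem_preimage, Set.mem_ofPred_eq, inner_add_right] at hx hxa
  linarith

end MeasureTheory

theorem generative_degenerate_attack {p q : ℕ}
    (P Q M : Measure (EuclideanSpace ℝ (Fin p) × EuclideanSpace ℝ (Fin q)))
    [IsProbabilityMeasure P] [IsProbabilityMeasure Q]
    (p₀ : Measure (EuclideanSpace ℝ (Fin q))) [IsProbabilityMeasure p₀]
    (ρ : ℝ) (hρ : ρ ∈ Set.Ioo (0:ℝ) 1)
    (u : EuclideanSpace ℝ (Fin p)) (hu : ‖u‖ = 1) (a : ℝ)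
    (hsupp : P.fst {x | ⟪u, x⟫ = a} = 1)
    (s : ℝ) (hs : 0 < s)
    (hQfst : Q.fst = P.fst.map (fun x => x + s • u))
    (hM : M = ENNReal.ofReal (1 - ρ) • P + ENNReal.ofReal ρ • Q)
    (fcl fbd fpoi : EuclideanSpace ℝ (Fin p) → EuclideanSpace ℝ (Fin q) → ℝ)
    (hfclmeas : Measurable (Function.uncurry fcl))
    (hfcl01 : ∀ x y, fcl x y ∈ Set.Icc (0:ℝ) 1)
    (hfbdmeas : Measurable (Function.uncurry fbd))
    (hfbd01 : ∀ x y, fbd x y ∈ Set.Icc (0:ℝ) 1)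
    (hfpoimeas : Measurable (Function.uncurry fpoi))
    (hfpoi01 : ∀ x y, fpoi x y ∈ Set.Icc (0:ℝ) 1)
    (hPker : ∀ A : Set (EuclideanSpace ℝ (Fin p) × EuclideanSpace ℝ (Fin q)),
      MeasurableSet A →
        P A = ∫⁻ x, ∫⁻ y in {y | (x, y) ∈ A}, ENNReal.ofReal (fcl x y) ∂p₀ ∂P.fst)
    (hQker : ∀ A : Set (EuclideanSpace ℝ (Fin p) × EuclideanSpace ℝ (Fin q)),
      MeasurableSet A →
        Q A = ∫⁻ x, ∫⁻ y in {y | (x, y) ∈ A}, ENNReal.ofReal (fbd x y) ∂p₀ ∂Q.fst)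
    (hMker : ∀ A : Set (EuclideanSpace ℝ (Fin p) × EuclideanSpace ℝ (Fin q)),
      MeasurableSet A →
        M A = ∫⁻ x, ∫⁻ y in {y | (x, y) ∈ A}, ENNReal.ofReal (fpoi x y) ∂p₀ ∂M.fst)
    (ℓ : ℝ → ℝ → ℝ)
    (fhat : EuclideanSpace ℝ (Fin p) → EuclideanSpace ℝ (Fin q) → ℝ) :
    (∫⁻ x, ∫⁻ y, ENNReal.ofReal (ℓ (fhat x y) (fcl x y)) ∂p₀ ∂P.fst) ≤
        (ENNReal.ofReal (1 - ρ))⁻¹ *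
          ∫⁻ x, ∫⁻ y, ENNReal.ofReal (ℓ (fhat x y) (fpoi x y)) ∂p₀ ∂M.fst ∧
      (∫⁻ x, ∫⁻ y, ENNReal.ofReal (ℓ (fhat x y) (fbd x y)) ∂p₀ ∂Q.fst) ≤
        (ENNReal.ofReal ρ)⁻¹ *
          ∫⁻ x, ∫⁻ y, ENNReal.ofReal (ℓ (fhat x y) (fpoi x y)) ∂p₀ ∂M.fst := by
  obtain ⟨hρ0, hρ1⟩ := hρ
  have hc : ENNReal.ofReal (1 - ρ) ≠ 0 := (ENNReal.ofReal_pos.2 (sub_pos.2 hρ1)).ne'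
  have hd : ENNReal.ofReal ρ ≠ 0 := (ENNReal.ofReal_pos.2 hρ0).ne'
  have : SFinite M := by rw [hM]; infer_instance
  have hPQ : P.fst ⟂ₘ Q.fst := by
    rw [hQfst]
    refine Measure.mutuallySingular_map_add_of_ae_inner_eq
      ((mem_ae_iff_prob_eq_one (measurableSet_eq_fun (by fun_prop) measurable_const)).2 hsupp) ?_
    rw [real_inner_smul_right, real_inner_self_eq_norm_sq, hu, one_pow, mul_one]
    exact hs.ne'
  have hMfst : M.fst = ENNReal.ofReal (1 - ρ) • P.fst + ENNReal.ofReal ρ • Q.fst := by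
    rw [hM, Measure.fst_add, Measure.fst_smul, Measure.fst_smul]
  have hcl := condDensity_ae_eq_of_add_of_mutuallySingular hc ENNReal.ofReal_ne_top hM hPQ
    hfclmeas hfpoimeas (fun x y => (hfcl01 x y).1) (fun x y => (hfpoi01 x y).1) hPker hMker
  have hbd := condDensity_ae_eq_of_add_of_mutuallySingular hd ENNReal.ofReal_ne_top
    (hM.trans (add_comm _ _)) hPQ.symm
    hfbdmeas hfpoimeas (fun x y => (hfbd01 x y).1) (fun x y => (hfpoi01 x y).1) hQker hMker
  constructor
  · exact (lintegral_lintegral_congr_of_ae_eq_prod hcl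
      fun x y t => ENNReal.ofReal (ℓ (fhat x y) t)).trans_le
      (lintegral_le_inv_mul_lintegral_of_smul_le hc ENNReal.ofReal_ne_top
        (hMfst ▸ Measure.le_add_right le_rfl) _)
  · exact (lintegral_lintegral_congr_of_ae_eq_prod hbd
      fun x y t => ENNReal.ofReal (ℓ (fhat x y) t)).trans_le
      (lintegral_le_inv_mul_lintegral_of_smul_le hd ENNReal.ofReal_ne_top
        (hMfst ▸ Measure.le_add_left le_rfl) _)
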